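/- For any proper and orthochronous Lorentz transformation A (a real 4×4 matrix), there exists a unique pair (v, O) with v ∈ ℝ³, |v| < 1, and O ∈ SO(3,ℝ), such that A = S(v)·R(O), where, with γ = 1/√(1 − |v|²), S(v) is the 4×4 block matrix with top-left 1×1 block γ, top-right 1×3 block γ·vᵀ, bottom-left 3×1 block γ·v, and bottom-right 3×3 block I₃ + (γ²/(1+γ))·v vᵀ, and R(O) is the 4×4 block matrix with top-left 1×1 block 1, zero off-diagonal blocks, and bottom-right 3×3 block O. -/

import Mathlib

/-- The Minkowski quadratic form on ℝ⁴: q(t,x,y,z) = x² + y² + z² − t². -/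
def mink (x : Fin 4 → ℝ) : ℝ := (x 1)^2 + (x 2)^2 + (x 3)^2 - (x 0)^2

/-- A real 4×4 matrix is a Lorentz transformation if it preserves the Minkowski form. -/
def IsLorentz (A : Matrix (Fin 4) (Fin 4) ℝ) : Prop :=
  ∀ x : Fin 4 → ℝ, mink (A.mulVec x) = mink x

/-- A Lorentz transformation is proper if its determinant is positive. -/
def IsProper (A : Matrix (Fin 4) (Fin 4) ℝ) : Prop := 0 < A.det

/-- A Lorentz transformation is orthochronous if it preserves the sign of the
time component of every timelike vector. -/
def IsOrthochronous (A : Matrix (Fin 4) (Fin 4) ℝ) : Prop :=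
  ∀ x : Fin 4 → ℝ, (x 1)^2 + (x 2)^2 + (x 3)^2 < (x 0)^2 →
    Real.sign (A.mulVec x 0) = Real.sign (x 0)

/-- Membership in SO(3,ℝ). -/
def SO3 (O : Matrix (Fin 3) (Fin 3) ℝ) : Prop := O.transpose * O = 1 ∧ O.det = 1

/-- Squared Euclidean norm of a vector in ℝ³. -/
def sq3 (v : Fin 3 → ℝ) : ℝ := (v 0)^2 + (v 1)^2 + (v 2)^2

/-- The Lorentz factor γ = 1/√(1 − |v|²). -/
noncomputable def gam (v : Fin 3 → ℝ) : ℝ := 1 / Real.sqrt (1 - sq3 v)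

/-- Build a 4×4 matrix from blocks of sizes 1 and 3. -/
def blk4 (a : Matrix (Fin 1) (Fin 1) ℝ) (b : Matrix (Fin 1) (Fin 3) ℝ)
    (c : Matrix (Fin 3) (Fin 1) ℝ) (d : Matrix (Fin 3) (Fin 3) ℝ) :
    Matrix (Fin 4) (Fin 4) ℝ :=
  Matrix.reindex finSumFinEquiv finSumFinEquiv (Matrix.fromBlocks a b c d)

/-- The boost matrix S(v), with γ = 1/√(1 − |v|²). -/
noncomputable def Smat (v : Fin 3 → ℝ) : Matrix (Fin 4) (Fin 4) ℝ :=
  blk4 (Matrix.of fun _ _ => gam v)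
       (Matrix.of fun _ j => gam v * v j)
       (Matrix.of fun i _ => gam v * v i)
       (1 + (gam v ^ 2 / (1 + gam v)) • Matrix.vecMulVec v v)

/-- The rotation matrix R(O). -/
def Rmat (O : Matrix (Fin 3) (Fin 3) ℝ) : Matrix (Fin 4) (Fin 4) ℝ :=
  blk4 1 0 0 O

/-! Orthochronicity gives `A₀₀ > 0`, and the Minkowski norm of the first column of `A`
forces it to be `(γ, γ v)` with `γ² (1 - |v|²) = 1`, i.e. the first column of the boost `S(v)`.
Hence `B = S(v)⁻¹ A` is a Lorentz transformation fixing `e₀`; applying `Bᵀ η B = η` to `e₀`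
shows that `Bᵀ` fixes `e₀` as well, so `B = R(O)` with `O` orthogonal, and
`det S(v) = 1` together with `det A > 0` gives `det O = 1`. For uniqueness, the first column of
`S(w) R(Q)` is that of `S(w)`, which determines `w`, and then `R(Q) = S(w)⁻¹ A`. -/

open Matrix

lemma blk4_apply (a : Matrix (Fin 1) (Fin 1) ℝ) (b : Matrix (Fin 1) (Fin 3) ℝ)
    (c : Matrix (Fin 3) (Fin 1) ℝ) (d : Matrix (Fin 3) (Fin 3) ℝ) :
    blk4 a b c d = !![a 0 0, b 0 0, b 0 1, b 0 2;
                      c 0 0, d 0 0, d 0 1, d 0 2;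
                      c 1 0, d 1 0, d 1 1, d 1 2;
                      c 2 0, d 2 0, d 2 1, d 2 2] := by
  ext i j; fin_cases i <;> fin_cases j <;> rfl

lemma blk4_mul (a a' : Matrix (Fin 1) (Fin 1) ℝ) (b b' : Matrix (Fin 1) (Fin 3) ℝ)
    (c c' : Matrix (Fin 3) (Fin 1) ℝ) (d d' : Matrix (Fin 3) (Fin 3) ℝ) :
    blk4 a b c d * blk4 a' b' c' d' =
      blk4 (a * a' + b * c') (a * b' + b * d') (c * a' + d * c') (c * b' + d * d') := by
  simp only [blk4, reindex_apply, submatrix_mul_equiv, fromBlocks_multiply]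

lemma blk4_transpose (a : Matrix (Fin 1) (Fin 1) ℝ) (b : Matrix (Fin 1) (Fin 3) ℝ)
    (c : Matrix (Fin 3) (Fin 1) ℝ) (d : Matrix (Fin 3) (Fin 3) ℝ) :
    (blk4 a b c d)ᵀ = blk4 aᵀ cᵀ bᵀ dᵀ := by
  simp only [blk4, transpose_reindex, fromBlocks_transpose]

lemma blk4_inj {a a' : Matrix (Fin 1) (Fin 1) ℝ} {b b' : Matrix (Fin 1) (Fin 3) ℝ}
    {c c' : Matrix (Fin 3) (Fin 1) ℝ} {d d' : Matrix (Fin 3) (Fin 3) ℝ} :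
    blk4 a b c d = blk4 a' b' c' d' ↔ a = a' ∧ b = b' ∧ c = c' ∧ d = d' := by
  simp only [blk4, EmbeddingLike.apply_eq_iff_eq, fromBlocks_inj]

def minkowskiMetric : Matrix (Fin 4) (Fin 4) ℝ := blk4 (-1) 0 0 1

local notation "η" => minkowskiMetric

lemma mink_add (x y : Fin 4 → ℝ) : mink (x + y) = mink x + 2 * (x ⬝ᵥ η *ᵥ y) + mink y := by
  simp [mink, minkowskiMetric, blk4_apply, dotProduct, mulVec, Fin.sum_univ_four]
  ring

lemma IsLorentz.dotProduct_mulVec_mulVec {A : Matrix (Fin 4) (Fin 4) ℝ} (hA : IsLorentz A)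
    (x y : Fin 4 → ℝ) : A *ᵥ x ⬝ᵥ η *ᵥ (A *ᵥ y) = x ⬝ᵥ η *ᵥ y := by
  have h := hA (x + y)
  rw [mulVec_add, mink_add, mink_add, hA x, hA y] at h
  linarith

lemma IsLorentz.transpose_mul_mul {A : Matrix (Fin 4) (Fin 4) ℝ} (hA : IsLorentz A) :
    Aᵀ * η * A = η := by
  ext i j
  have h := hA.dotProduct_mulVec_mulVec (Pi.single i 1) (Pi.single j 1)
  rw [mulVec_mulVec, dotProduct_mulVec, ← vecMul_transpose, vecMul_vecMul] at h
  simpa [single_one_vecMul, single_dotProduct, Matrix.mul_assoc] using h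

lemma IsLorentz.mul {A B : Matrix (Fin 4) (Fin 4) ℝ} (hA : IsLorentz A) (hB : IsLorentz B) :
    IsLorentz (A * B) := fun x => by rw [← mulVec_mulVec, hA, hB]

lemma IsLorentz.inv {A : Matrix (Fin 4) (Fin 4) ℝ} (hA : IsLorentz A) (hdet : IsUnit A.det) :
    IsLorentz A⁻¹ := fun x => by
  rw [← hA, mulVec_mulVec, mul_nonsing_inv A hdet, one_mulVec]

lemma IsOrthochronous.apply_zero_zero_pos {A : Matrix (Fin 4) (Fin 4) ℝ}
    (ho : IsOrthochronous A) : 0 < A 0 0 := by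
  have h := ho (Pi.single 0 1) (by simp)
  simp only [mulVec_single_one, col_apply, Pi.single_eq_same, Real.sign_one] at h
  have hne : A 0 0 ≠ 0 := fun h0 => by simp [h0, Real.sign_zero] at h
  simpa [h] using Real.sign_mul_pos_of_ne_zero _ hne

lemma rmat_transpose_mul_mul (O : Matrix (Fin 3) (Fin 3) ℝ) :
    (Rmat O)ᵀ * η * Rmat O = blk4 (-1) 0 0 (Oᵀ * O) := by
  simp [Rmat, minkowskiMetric, blk4_transpose, blk4_mul]

lemma transpose_mul_self_of_isLorentz_rmat {O : Matrix (Fin 3) (Fin 3) ℝ}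
    (h : IsLorentz (Rmat O)) : Oᵀ * O = 1 := by
  have h' := h.transpose_mul_mul
  rw [rmat_transpose_mul_mul, minkowskiMetric, blk4_inj] at h'
  exact h'.2.2.2

lemma rmat_injective : Function.Injective Rmat := fun _ _ h => (blk4_inj.1 h).2.2.2

lemma det_rmat (O : Matrix (Fin 3) (Fin 3) ℝ) : (Rmat O).det = O.det := by
  simp [Rmat, blk4, det_fromBlocks_zero₂₁]

lemma minkowskiMetric_mulVec_single_zero : η *ᵥ Pi.single 0 1 = -Pi.single 0 1 := by
  ext i; fin_cases i <;> simp [minkowskiMetric, blk4_apply, mulVec, dotProduct, Fin.sum_univ_four]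

lemma IsLorentz.transpose_mulVec_single_zero {B : Matrix (Fin 4) (Fin 4) ℝ} (hB : IsLorentz B)
    (h0 : B *ᵥ Pi.single 0 1 = Pi.single 0 1) : Bᵀ *ᵥ Pi.single 0 1 = Pi.single 0 1 := by
  have h : (Bᵀ * η * B) *ᵥ Pi.single 0 1 = η *ᵥ Pi.single 0 1 := by rw [hB.transpose_mul_mul]
  rw [← mulVec_mulVec, h0, ← mulVec_mulVec, minkowskiMetric_mulVec_single_zero, mulVec_neg] at h
  exact neg_injective h

lemma IsLorentz.eq_rmat_submatrix {B : Matrix (Fin 4) (Fin 4) ℝ} (hB : IsLorentz B)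
    (h0 : B *ᵥ Pi.single 0 1 = Pi.single 0 1) : B = Rmat (B.submatrix Fin.succ Fin.succ) := by
  have hcol (i : Fin 4) : B i 0 = (Pi.single 0 1 : Fin 4 → ℝ) i := by
    rw [← h0, mulVec_single_one, col_apply]
  have hrow (j : Fin 4) : B 0 j = (Pi.single 0 1 : Fin 4 → ℝ) j := by
    rw [← hB.transpose_mulVec_single_zero h0, mulVec_single_one, col_apply, transpose_apply]
  ext i j
  fin_cases i <;> fin_cases j <;> simp [Rmat, blk4_apply, hcol, hrow]

lemma gam_sq_mul {v : Fin 3 → ℝ} (h : sq3 v < 1) : gam v ^ 2 * (1 - sq3 v) = 1 := by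
  rw [gam, div_pow, one_pow, Real.sq_sqrt (by linarith)]
  exact one_div_mul_cancel (by linarith)

lemma gam_pos {v : Fin 3 → ℝ} (h : sq3 v < 1) : 0 < gam v := by
  unfold gam
  have : 0 < Real.sqrt (1 - sq3 v) := Real.sqrt_pos.2 (by linarith)
  positivity

lemma gam_eq_of_sq_mul {v : Fin 3 → ℝ} {c : ℝ} (hc : 0 < c) (h : c ^ 2 * (1 - sq3 v) = 1) :
    gam v = c := by
  have h1 : 1 - sq3 v = (1 / c) ^ 2 := by field_simp; linarith
  rw [gam, h1, Real.sqrt_sq (by positivity), one_div_one_div]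

lemma gam_sq_div_mul_sq3 {v : Fin 3 → ℝ} (h : sq3 v < 1) :
    gam v ^ 2 / (1 + gam v) * sq3 v = gam v - 1 := by
  have := gam_pos h
  field_simp
  nlinarith [gam_sq_mul h]

lemma gam_sq_div_mul_one_add {v : Fin 3 → ℝ} (h : sq3 v < 1) :
    gam v ^ 2 / (1 + gam v) * (1 + gam v) = gam v ^ 2 := by
  have := gam_pos h
  field_simp

lemma smat_apply (v : Fin 3 → ℝ) :
    Smat v =
      !![gam v, gam v * v 0, gam v * v 1, gam v * v 2;
        gam v * v 0, 1 + gam v ^ 2 / (1 + gam v) * (v 0 * v 0),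
          gam v ^ 2 / (1 + gam v) * (v 0 * v 1), gam v ^ 2 / (1 + gam v) * (v 0 * v 2);
        gam v * v 1, gam v ^ 2 / (1 + gam v) * (v 1 * v 0),
          1 + gam v ^ 2 / (1 + gam v) * (v 1 * v 1), gam v ^ 2 / (1 + gam v) * (v 1 * v 2);
        gam v * v 2, gam v ^ 2 / (1 + gam v) * (v 2 * v 0),
          gam v ^ 2 / (1 + gam v) * (v 2 * v 1), 1 + gam v ^ 2 / (1 + gam v) * (v 2 * v 2)] := by
  rw [Smat, blk4_apply]
  simp [vecMulVec_apply, one_apply]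

lemma smat_isLorentz {v : Fin 3 → ℝ} (h : sq3 v < 1) : IsLorentz (Smat v) := by
  intro x
  have hg := gam_sq_mul h
  have hks := gam_sq_div_mul_sq3 h
  have hk1 := gam_sq_div_mul_one_add h
  unfold sq3 at hg hks
  simp only [smat_apply, mink, mulVec, dotProduct, Fin.sum_univ_four, of_apply, cons_val',
    cons_val_fin_one, cons_val_zero, cons_val_one, cons_val]
  linear_combination (-(x 0 ^ 2)) * hg
    + (2 * gam v * x 0 * (v 0 * x 1 + v 1 * x 2 + v 2 * x 3)
       + gam v ^ 2 / (1 + gam v) * (v 0 * x 1 + v 1 * x 2 + v 2 * x 3) ^ 2) * hks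
    + (v 0 * x 1 + v 1 * x 2 + v 2 * x 3) ^ 2 * hk1

lemma det_smat {v : Fin 3 → ℝ} (h : sq3 v < 1) : (Smat v).det = 1 := by
  have hg := gam_sq_mul h
  have hks := gam_sq_div_mul_sq3 h
  unfold sq3 at hg hks
  rw [smat_apply, det_succ_row_zero]
  simp [Fin.sum_univ_succ, det_fin_three, Fin.succAbove]
  linear_combination gam v * hks + hg

lemma smat_mulVec_single_zero (v : Fin 3 → ℝ) :
    Smat v *ᵥ Pi.single 0 1 = ![gam v, gam v * v 0, gam v * v 1, gam v * v 2] := by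
  rw [mulVec_single_one, smat_apply]
  ext i; fin_cases i <;> rfl

lemma rmat_mulVec_single_zero (O : Matrix (Fin 3) (Fin 3) ℝ) :
    Rmat O *ᵥ Pi.single 0 1 = Pi.single 0 1 := by
  rw [mulVec_single_one]
  ext i; fin_cases i <;> simp [Rmat, blk4_apply]

lemma isUnit_det_smat {v : Fin 3 → ℝ} (h : sq3 v < 1) : IsUnit (Smat v).det := by
  rw [det_smat h]; exact isUnit_one

lemma IsLorentz.exists_smat_mulVec_single_zero {A : Matrix (Fin 4) (Fin 4) ℝ} (hA : IsLorentz A)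
    (h : 0 < A 0 0) : ∃ v, sq3 v < 1 ∧ Smat v *ᵥ Pi.single 0 1 = A *ᵥ Pi.single 0 1 := by
  set v : Fin 3 → ℝ := fun i => A i.succ 0 / A 0 0
  have hnorm : A 0 0 ^ 2 * (1 - sq3 v) = 1 := by
    have hmink := hA (Pi.single 0 1)
    simp [mink] at hmink
    simp only [sq3, v, Fin.succ_zero_eq_one, Fin.succ_one_eq_two, Fin.reduceSucc]
    field_simp
    linarith
  have hv : sq3 v < 1 := by nlinarith
  refine ⟨v, hv, ?_⟩
  rw [smat_mulVec_single_zero, gam_eq_of_sq_mul h hnorm, mulVec_single_one]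
  ext i; fin_cases i <;> simp [v] <;> field_simp

lemma smat_mulVec_single_zero_injective {v w : Fin 3 → ℝ} (hv : sq3 v < 1)
    (h : Smat v *ᵥ Pi.single 0 1 = Smat w *ᵥ Pi.single 0 1) : v = w := by
  rw [smat_mulVec_single_zero, smat_mulVec_single_zero] at h
  have hγ : gam v = gam w := congrFun h 0
  have hγ0 : gam v ≠ 0 := (gam_pos hv).ne'
  ext i
  have hi := congrFun h i.succ
  fin_cases i <;> simpa [← hγ, hγ0] using hi

lemma smat_mul_rmat_injective {v w : Fin 3 → ℝ} {O Q : Matrix (Fin 3) (Fin 3) ℝ}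
    (hv : sq3 v < 1) (h : Smat v * Rmat O = Smat w * Rmat Q) : v = w ∧ O = Q := by
  have hcol := congrArg (· *ᵥ Pi.single 0 1) h
  simp only [← mulVec_mulVec, rmat_mulVec_single_zero] at hcol
  obtain rfl := smat_mulVec_single_zero_injective hv hcol
  refine ⟨rfl, rmat_injective ?_⟩
  calc Rmat O = (Smat v)⁻¹ * (Smat v * Rmat O) :=
        (nonsing_inv_mul_cancel_left _ _ (isUnit_det_smat hv)).symm
    _ = Rmat Q := by rw [h, nonsing_inv_mul_cancel_left _ _ (isUnit_det_smat hv)]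

/-- Any proper orthochronous Lorentz transformation factors uniquely as S(v)·R(O)
with |v| < 1 and O ∈ SO(3,ℝ). -/
theorem proper_orthochronous_lorentz_decomposition (A : Matrix (Fin 4) (Fin 4) ℝ)
    (hA : IsLorentz A) (hp : IsProper A) (ho : IsOrthochronous A) :
    ∃! p : (Fin 3 → ℝ) × Matrix (Fin 3) (Fin 3) ℝ,
      Real.sqrt (sq3 p.1) < 1 ∧ SO3 p.2 ∧ A = Smat p.1 * Rmat p.2 := by
  obtain ⟨v, hv, hcol⟩ := hA.exists_smat_mulVec_single_zero ho.apply_zero_zero_pos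
  have hS := isUnit_det_smat hv
  set B := (Smat v)⁻¹ * A
  have hB : IsLorentz B := ((smat_isLorentz hv).inv hS).mul hA
  have hBe : B *ᵥ Pi.single 0 1 = Pi.single 0 1 := by
    rw [← mulVec_mulVec, ← hcol, mulVec_mulVec, nonsing_inv_mul _ hS, one_mulVec]
  set O := B.submatrix Fin.succ Fin.succ
  have hBO : B = Rmat O := hB.eq_rmat_submatrix hBe
  have hAO : A = Smat v * Rmat O := by
    rw [← hBO]; exact (mul_nonsing_inv_cancel_left _ A hS).symm
  have hO : Oᵀ * O = 1 := transpose_mul_self_of_isLorentz_rmat (hBO ▸ hB)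
  have hdet : O.det = 1 := by
    have hpos : 0 < O.det := by
      rwa [IsProper, hAO, det_mul, det_smat hv, det_rmat, one_mul] at hp
    have hsq : O.det * O.det = 1 := by
      simpa using congrArg det hO
    nlinarith
  refine ⟨(v, O), ⟨by rwa [Real.sqrt_lt' one_pos, one_pow], ⟨hO, hdet⟩, hAO⟩, ?_⟩
  rintro ⟨w, Q⟩ ⟨-, -, hAQ⟩
  obtain ⟨rfl, rfl⟩ := smat_mul_rmat_injective hv (hAO.symm.trans hAQ)
  rfl
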